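/- arXiv:2008.05227 — 3 statements merged into one kernel-verified Lean document; each statement's English description precedes it below -/
import Mathlib

section
/- Let X be a complex Banach space and F : ℂ → X a 1-periodic function on the real line that is analytic and bounded by A in norm on the strip Ω_a = {z ∈ ℂ : −a < Im z < a} for some a > 0. Then for every N ∈ ℕ, ‖∫₀¹ F(x) dx − (1/N) Σ_{k=0}^{N−1} F(k/N)‖ ≤ 2A/(e^{aN} − 1). -/
open Complex Set Filter Topology MeasureTheory intervalIntegral Finset
open scoped Real Interval

/-!
By Hahn–Banach it suffices to treat scalar `f`. Sampling at the nodes `k / N` annihilates every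
Fourier mode `e(m x)` with `N ∤ m` and averages the others to `1`, so the trapezoidal sum equals
`∑ⱼ c_{jN}` and the error is `-∑_{j ≠ 0} c_{jN}`. Periodicity on `ℝ` extends to the strip by the
identity theorem, so the integral defining `c_n` can be moved to the line `Im z = ∓b` (`b < a`),
giving `‖c_n‖ ≤ A e^{-2πb|n|}`; summing two geometric tails gives the bound.
-/

def horizontalStrip (a : ℝ) : Set ℂ := {z : ℂ | -a < z.im ∧ z.im < a}

namespace horizontalStrip

variable {a : ℝ}

theorem mem_iff {z : ℂ} : z ∈ horizontalStrip a ↔ -a < z.im ∧ z.im < a := Iff.rfl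

theorem eq_preimage : horizontalStrip a = im ⁻¹' Ioo (-a) a := rfl

theorem isOpen : IsOpen (horizontalStrip a) :=
  eq_preimage ▸ isOpen_Ioo.preimage continuous_im

theorem isPreconnected : IsPreconnected (horizontalStrip a) :=
  eq_preimage ▸ ((convex_Ioo (-a) a).linear_preimage imLm).isPreconnected

theorem add_ofReal_mem {z : ℂ} (hz : z ∈ horizontalStrip a) (x : ℝ) :
    z + x ∈ horizontalStrip a := by
  simpa [mem_iff] using hz

theorem ofReal_mem (ha : 0 < a) (x : ℝ) : (x : ℂ) ∈ horizontalStrip a := by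
  simp [mem_iff, ha]

theorem mem_of_abs_im_lt {z : ℂ} (hz : |z.im| < a) : z ∈ horizontalStrip a :=
  abs_lt.mp hz

end horizontalStrip

theorem DifferentiableOn.add_one_eqOn_of_ofReal {E : Type*} [NormedAddCommGroup E]
    [NormedSpace ℂ E] [CompleteSpace E] {f : ℂ → E} {U : Set ℂ} (hU : IsOpen U)
    (hUc : IsPreconnected U) (hU1 : ∀ z ∈ U, z + 1 ∈ U) (hf : DifferentiableOn ℂ f U)
    {x₀ : ℝ} (hx₀ : (x₀ : ℂ) ∈ U) (hper : ∀ x : ℝ, f (x + 1) = f x) :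
    EqOn (fun z ↦ f (z + 1)) f U := by
  have hshift : DifferentiableOn ℂ (fun z ↦ f (z + 1)) U :=
    hf.comp (differentiable_id.add_const 1).differentiableOn hU1
  refine (hshift.analyticOnNhd hU).eqOn_of_preconnected_of_frequently_eq
    (hf.analyticOnNhd hU) hUc hx₀ ?_
  have hreal : Tendsto ((↑) : ℝ → ℂ) (𝓝[≠] x₀) (𝓝[≠] (x₀ : ℂ)) :=
    continuous_ofReal.continuousWithinAt.tendsto_nhdsWithin fun _ _ ↦ by simp_all
  exact hreal.frequently (Frequently.of_forall hper)

theorem integral_zero_one_eq_integral_add_mul_I {E : Type*} [NormedAddCommGroup E]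
    [NormedSpace ℂ E] [CompleteSpace E] {g : ℂ → E} {s : ℝ}
    (hg : DifferentiableOn ℂ g ([[0, 1]] ×ℂ [[0, s]]))
    (hper : ∀ y ∈ [[0, s]], g (1 + y * I) = g (y * I)) :
    ∫ x in (0:ℝ)..1, g x = ∫ x in (0:ℝ)..1, g (x + s * I) := by
  have hrect := integral_boundary_rect_eq_zero_of_differentiableOn g 0 (1 + s * I)
    (by simpa using hg)
  have hvert : ∫ y in (0:ℝ)..s, g (1 + y * I) = ∫ y in (0:ℝ)..s, g (y * I) :=
    integral_congr hper
  simp only [zero_re, zero_im, add_re, add_im, one_re, one_im, mul_re, mul_im, ofReal_re,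
    ofReal_im, I_re, I_im] at hrect
  norm_num [hvert] at hrect
  exact sub_eq_zero.mp hrect

theorem geom_sum_of_pow_eq_one {R : Type*} [CommRing R] [IsDomain R] [DecidableEq R] {ω : R}
    {N : ℕ} (hω : ω ^ N = 1) : ∑ k ∈ range N, ω ^ k = if ω = 1 then (N : R) else 0 := by
  split_ifs with h
  · simp [h]
  · have : (1 - ω) * ∑ k ∈ range N, ω ^ k = 0 := by rw [mul_neg_geom_sum, hω, sub_self]
    exact (mul_eq_zero.mp this).resolve_left (sub_ne_zero.mpr (Ne.symm h))

theorem sum_fourier_div_natCast {N : ℕ} (hN : N ≠ 0) (m : ℤ) :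
    ∑ k ∈ range N, fourier m (((k : ℝ) / N : ℝ) : UnitAddCircle) =
      if (N : ℤ) ∣ m then (N : ℂ) else 0 := by
  set ζ := cexp (2 * π * I / N)
  have hζ : IsPrimitiveRoot ζ N := isPrimitiveRoot_exp N hN
  have hterm (k : ℕ) : fourier m (((k : ℝ) / N : ℝ) : UnitAddCircle) = (ζ ^ m) ^ k := by
    rw [fourier_coe_apply, ← exp_int_mul, ← exp_nat_mul]
    push_cast
    ring_nf
  have hpow : (ζ ^ m) ^ N = 1 := by
    rw [← zpow_natCast, ← zpow_mul, mul_comm, zpow_mul, zpow_natCast, hζ.pow_eq_one, one_zpow]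
  simp only [hterm, geom_sum_of_pow_eq_one hpow, hζ.zpow_eq_one_iff_dvd]

theorem hasSum_fourierCoeff_mul_natCast {g : C(UnitAddCircle, ℂ)}
    (hg : Summable (fourierCoeff g)) {N : ℕ} (hN : N ≠ 0) :
    HasSum (fun j : ℤ ↦ fourierCoeff g (j * N))
      ((N : ℂ)⁻¹ * ∑ k ∈ range N, g (((k : ℝ) / N : ℝ) : UnitAddCircle)) := by
  have hsamples : HasSum (fun m : ℤ ↦ (N : ℂ)⁻¹ *
      ∑ k ∈ range N, fourierCoeff g m * fourier m (((k : ℝ) / N : ℝ) : UnitAddCircle))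
      ((N : ℂ)⁻¹ * ∑ k ∈ range N, g (((k : ℝ) / N : ℝ) : UnitAddCircle)) :=
    (hasSum_sum fun k _ ↦ has_pointwise_sum_fourier_series_of_summable hg _).mul_left _
  have hterm (m : ℤ) : (N : ℂ)⁻¹ *
      ∑ k ∈ range N, fourierCoeff g m * fourier m (((k : ℝ) / N : ℝ) : UnitAddCircle) =
      if (N : ℤ) ∣ m then fourierCoeff g m else 0 := by
    rw [← mul_sum, sum_fourier_div_natCast hN]
    split_ifs
    · field_simp
    · simp
  simp only [hterm] at hsamples
  have hinj : Function.Injective fun j : ℤ ↦ j * N := mul_left_injective₀ (by exact_mod_cast hN)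
  rw [← hinj.hasSum_iff] at hsamples
  · convert hsamples using 1
    ext j
    simp
  · rintro m hm
    rw [if_neg]
    rintro ⟨j, rfl⟩
    exact hm ⟨j, mul_comm _ _⟩

section GeometricMajorant

variable {E : Type*} [NormedAddCommGroup E] {c : ℤ → E} {A r : ℝ}

theorem hasSum_mul_pow_succ (hr0 : 0 ≤ r) (hr1 : r < 1) :
    HasSum (fun n : ℕ ↦ A * r ^ (n + 1)) (A * r / (1 - r)) := by
  simpa [pow_succ, mul_assoc, mul_comm r, div_eq_mul_inv] using
    (hasSum_geometric_of_lt_one hr0 hr1).mul_left (A * r)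

variable [CompleteSpace E]

theorem summable_of_norm_le_mul_pow_natAbs (hr0 : 0 ≤ r) (hr1 : r < 1)
    (hc : ∀ n, ‖c n‖ ≤ A * r ^ n.natAbs) : Summable c := by
  have hnat : Summable fun n : ℕ ↦ A * r ^ n :=
    (summable_geometric_of_lt_one hr0 hr1).mul_left A
  refine Summable.of_nat_of_neg (hnat.of_norm_bounded fun n ↦ ?_)
    (hnat.of_norm_bounded fun n ↦ ?_)
  · simpa using hc n
  · simpa using hc (-n)

theorem norm_tsum_sub_zero_le (hr0 : 0 ≤ r) (hr1 : r < 1)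
    (hc : ∀ n, ‖c n‖ ≤ A * r ^ n.natAbs) :
    ‖∑' n, c n - c 0‖ ≤ 2 * A * r / (1 - r) := by
  have hpos (n : ℕ) : ‖c (n + 1)‖ ≤ A * r ^ (n + 1) := by
    have := hc (n + 1 : ℕ)
    rwa [Int.natAbs_natCast, Nat.cast_succ] at this
  have hneg (n : ℕ) : ‖c (-(n + 1))‖ ≤ A * r ^ (n + 1) := by
    have := hc (-(n + 1 : ℕ))
    rwa [Int.natAbs_neg, Int.natAbs_natCast, Nat.cast_succ] at this
  have hmaj := hasSum_mul_pow_succ (A := A) hr0 hr1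
  have hsplit := tsum_of_add_one_of_neg_add_one (hmaj.summable.of_norm_bounded hpos)
    (hmaj.summable.of_norm_bounded hneg)
  calc ‖∑' n, c n - c 0‖ = ‖∑' n : ℕ, c (n + 1) + ∑' n : ℕ, c (-(n + 1))‖ := by
        rw [hsplit, add_right_comm, add_sub_cancel_right]
    _ ≤ A * r / (1 - r) + A * r / (1 - r) :=
        norm_add_le_of_le (tsum_of_norm_bounded hmaj hpos) (tsum_of_norm_bounded hmaj hneg)
    _ = 2 * A * r / (1 - r) := by ring

end GeometricMajorant

section FourierDecay

variable {E : Type*} [NormedAddCommGroup E] [NormedSpace ℂ E] [CompleteSpace E] {f : ℂ → E}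
  {a A : ℝ}

theorem norm_integral_exp_smul_le_of_abs_lt
    (hper : ∀ z ∈ horizontalStrip a, f (z + 1) = f z)
    (hf : DifferentiableOn ℂ f (horizontalStrip a))
    (hbd : ∀ z ∈ horizontalStrip a, ‖f z‖ ≤ A) (n : ℤ) {s : ℝ} (hs : |s| < a) :
    ‖∫ x in (0:ℝ)..1, cexp (-(2 * π * I * n * x)) • f x‖ ≤ A * Real.exp (2 * π * n * s) := by
  set g : ℂ → E := fun z ↦ cexp (-(2 * π * I * n * z)) • f z
  have hrect : [[(0:ℝ), 1]] ×ℂ [[0, s]] ⊆ horizontalStrip a := fun z hz ↦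
    horizontalStrip.mem_of_abs_im_lt <|
      (by simpa using abs_sub_left_of_mem_uIcc hz.2 : |z.im| ≤ |s|).trans_lt hs
  have hg : DifferentiableOn ℂ g (horizontalStrip a) :=
    ((differentiable_id.const_mul _).neg.cexp.differentiableOn).smul hf
  have hgper (y : ℝ) (hy : y ∈ [[0, s]]) : g (1 + y * I) = g (y * I) := by
    have hmem : (y * I : ℂ) ∈ horizontalStrip a :=
      hrect ⟨by simp, by simpa using hy⟩
    have hexp : cexp (-(2 * π * I * n * (1 + y * I))) = cexp (-(2 * π * I * n * (y * I))) := by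
      rw [show -(2 * π * I * n * (1 + y * I)) =
          -(2 * π * I * n * (y * I)) + (-n : ℤ) * (2 * π * I) by push_cast; ring,
        exp_add, exp_int_mul_two_pi_mul_I, mul_one]
    simp only [g]
    rw [hexp, add_comm (1 : ℂ), hper _ hmem]
  rw [integral_zero_one_eq_integral_add_mul_I (hg.mono hrect) hgper]
  have hbound (x : ℝ) : ‖g (x + s * I)‖ ≤ A * Real.exp (2 * π * n * s) := by
    have hmem : (x + s * I : ℂ) ∈ horizontalStrip a :=
      horizontalStrip.mem_of_abs_im_lt (by simpa using hs)
    have hre : (-(2 * π * I * n * (x + s * I))).re = 2 * π * n * s := by simp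
    rw [norm_smul, norm_exp, hre, mul_comm]
    exact mul_le_mul_of_nonneg_right (hbd _ hmem) (Real.exp_pos _).le
  simpa using norm_integral_le_of_norm_le_const (a := 0) (b := 1) fun x _ ↦ hbound x

theorem norm_integral_exp_smul_le_pow
    (hper : ∀ z ∈ horizontalStrip a, f (z + 1) = f z)
    (hf : DifferentiableOn ℂ f (horizontalStrip a))
    (hbd : ∀ z ∈ horizontalStrip a, ‖f z‖ ≤ A) (n : ℤ) {b : ℝ} (hb : 0 ≤ b) (hba : b < a) :
    ‖∫ x in (0:ℝ)..1, cexp (-(2 * π * I * n * x)) • f x‖ ≤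
      A * Real.exp (-(2 * π * b)) ^ n.natAbs := by
  rw [← Real.exp_nat_mul]
  rcases le_or_gt 0 n with hn | hn
  · convert norm_integral_exp_smul_le_of_abs_lt hper hf hbd n (s := -b)
      (by rwa [abs_neg, abs_of_nonneg hb]) using 3
    rw [Nat.cast_natAbs, Int.cast_abs, abs_of_nonneg (by exact_mod_cast hn)]
    ring
  · convert norm_integral_exp_smul_le_of_abs_lt hper hf hbd n (s := b)
      (by rwa [abs_of_nonneg hb]) using 3
    rw [Nat.cast_natAbs, Int.cast_abs, abs_of_neg (by exact_mod_cast hn)]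
    ring

end FourierDecay

theorem norm_intervalIntegral_sub_trapezoid_le {f : ℂ → ℂ} {a A : ℝ} (ha : 0 < a)
    (hper : ∀ x : ℝ, f (x + 1) = f x) (hf : DifferentiableOn ℂ f (horizontalStrip a))
    (hbd : ∀ z ∈ horizontalStrip a, ‖f z‖ ≤ A) {N : ℕ} (hN : N ≠ 0) :
    ‖(∫ x in (0:ℝ)..1, f x) - (N : ℂ)⁻¹ • ∑ k ∈ range N, f ((k : ℝ) / N)‖ ≤
      2 * A / (Real.exp (a * N) - 1) := by
  have hperS := hf.add_one_eqOn_of_ofReal horizontalStrip.isOpen horizontalStrip.isPreconnected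
    (fun z hz ↦ by simpa using horizontalStrip.add_ofReal_mem hz 1)
    (horizontalStrip.ofReal_mem ha 0) hper
  have hcont : Continuous fun x : ℝ ↦ f x :=
    hf.continuousOn.comp_continuous continuous_ofReal (horizontalStrip.ofReal_mem ha)
  have hperR : Function.Periodic (fun x : ℝ ↦ f x) 1 := fun x ↦ by simpa using hper x
  let g : C(UnitAddCircle, ℂ) := ⟨hperR.lift, continuous_coinduced_dom.mpr hcont⟩
  have hg (x : ℝ) : g x = f x := hperR.lift_coe x
  have hcoeff (n : ℤ) :
      fourierCoeff g n = ∫ x in (0:ℝ)..1, cexp (-(2 * π * I * n * x)) • f x := by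
    simp only [fourierCoeff_eq_intervalIntegral g n 0, zero_add, div_one, one_smul,
      fourier_coe_apply, hg]
    refine integral_congr fun x _ ↦ ?_
    push_cast
    ring_nf
  -- Taking `b = a / (2π) < a` makes the decay rate exactly `e^{-a}`, the one in the bound.
  set r := Real.exp (-a)
  have hdecay (n : ℤ) : ‖fourierCoeff g n‖ ≤ A * r ^ n.natAbs := by
    have h2π : a / (2 * π) < a := div_lt_self ha (by linarith [Real.pi_gt_three])
    simpa [hcoeff, r, mul_div_cancel₀ a Real.two_pi_pos.ne'] using
      norm_integral_exp_smul_le_pow hperS hf hbd n (by positivity) h2π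
  have hr1 : r < 1 := Real.exp_lt_one_iff.mpr (neg_lt_zero.mpr ha)
  have halias := hasSum_fourierCoeff_mul_natCast
    (summable_of_norm_le_mul_pow_natAbs (Real.exp_pos _).le hr1 hdecay) hN
  have htail := norm_tsum_sub_zero_le (c := fun j : ℤ ↦ fourierCoeff g (j * N))
    (pow_nonneg (Real.exp_pos _).le N) (pow_lt_one₀ (Real.exp_pos _).le hr1 hN) fun j ↦ by
      simpa [Int.natAbs_mul, pow_mul'] using hdecay (j * N)
  have hmean : ∫ x in (0:ℝ)..1, f x = fourierCoeff g 0 := by simpa using (hcoeff 0).symm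
  have hsamples : (N : ℂ)⁻¹ • ∑ k ∈ range N, f ((k : ℝ) / N) =
      (N : ℂ)⁻¹ * ∑ k ∈ range N, g (((k : ℝ) / N : ℝ) : UnitAddCircle) := by
    simp [hg]
  have hrN : r ^ N = (Real.exp (a * N))⁻¹ := by rw [← Real.exp_nat_mul, ← Real.exp_neg]; ring_nf
  rw [hmean, hsamples, ← halias.tsum_eq, norm_sub_rev]
  calc _ ≤ 2 * A * r ^ N / (1 - r ^ N) := by simpa using htail
    _ = 2 * A / (Real.exp (a * N) - 1) := by
      rw [hrN]
      field_simp

theorem stmt_3 {X : Type*} [NormedAddCommGroup X] [NormedSpace ℂ X] [CompleteSpace X]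
    (F : ℂ → X) (a A : ℝ) (ha : 0 < a)
    (hper : ∀ x : ℝ, F (x + 1) = F x)
    (han : DifferentiableOn ℂ F {z : ℂ | -a < z.im ∧ z.im < a})
    (hbd : ∀ z ∈ {z : ℂ | -a < z.im ∧ z.im < a}, ‖F z‖ ≤ A)
    (N : ℕ) (hN : 0 < N) :
    ‖(∫ x in (0:ℝ)..1, F x) - (N : ℂ)⁻¹ • ∑ k ∈ Finset.range N, F ((k : ℝ) / N)‖ ≤
      2 * A / (Real.exp (a * N) - 1) := by
  have hA : 0 ≤ A := (norm_nonneg _).trans (hbd 0 (horizontalStrip.ofReal_mem ha 0))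
  have hexp : 1 < Real.exp (a * N) := Real.one_lt_exp_iff.mpr (by positivity)
  refine NormedSpace.norm_le_dual_bound ℂ _ (div_nonneg (by positivity) (by linarith))
    fun φ ↦ ?_
  have hFint : IntervalIntegrable (fun x : ℝ ↦ F x) volume 0 1 :=
    (han.continuousOn.comp_continuous continuous_ofReal
      (horizontalStrip.ofReal_mem ha)).intervalIntegrable 0 1
  rw [map_sub, map_smul, map_sum, ← φ.intervalIntegral_comp_comm hFint]
  calc _ ≤ 2 * (‖φ‖ * A) / (Real.exp (a * N) - 1) :=
        norm_intervalIntegral_sub_trapezoid_le (f := φ ∘ F) ha (fun x ↦ by simp [hper])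
          (φ.differentiable.comp_differentiableOn han)
          (fun z hz ↦ φ.le_opNorm_of_le (hbd z hz)) hN.ne'
    _ = 2 * A / (Real.exp (a * N) - 1) * ‖φ‖ := by ring
end

section
/- For all natural numbers m > M ≥ 1, one has (m+M)! / ((m−M−1)! · (m−1)^{2M+1}) ≤ 6. -/
/-!
Write `a = m - 1` and `k = m - M - 1`. The factors `m - M, …, m + M - 2` of `(m + M)! / k!` are
symmetric about `a`, and `(a - i) (a + i) ≤ a²` bounds their product by `a ^ (2M - 1)`. The two
remaining factors satisfy `(m + M) (m + M - 1) ≤ (2a + 1) · 2a ≤ 6a²`.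
-/

open Nat

theorem factorial_add_le_factorial_mul_pow (k n : ℕ) :
    (k + 2 * n + 1)! ≤ k ! * (k + n + 1) ^ (2 * n + 1) := by
  induction n generalizing k with
  | zero => simp [Nat.factorial_succ, mul_comm]
  | succ n ih =>
    have outer_pair : (k + 2 * n + 3) * (k + 1) ≤ (k + n + 2) ^ 2 := by nlinarith
    calc (k + 2 * (n + 1) + 1)! = (k + 2 * n + 3) * ((k + 1) + 2 * n + 1)! := by
          rw [show k + 2 * (n + 1) + 1 = ((k + 1) + 2 * n + 1) + 1 by ring, Nat.factorial_succ]
          ring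
      _ ≤ (k + 2 * n + 3) * ((k + 1)! * (k + 1 + n + 1) ^ (2 * n + 1)) := by
          gcongr
          exact ih (k + 1)
      _ = (k + 2 * n + 3) * (k + 1) * (k ! * (k + n + 2) ^ (2 * n + 1)) := by
          rw [Nat.factorial_succ]; ring
      _ ≤ (k + n + 2) ^ 2 * (k ! * (k + n + 2) ^ (2 * n + 1)) := by gcongr
      _ = k ! * (k + (n + 1) + 1) ^ (2 * (n + 1) + 1) := by ring

theorem factorial_add_le_six_mul_factorial_mul_pow (k n : ℕ) :
    (k + 2 * n + 3)! ≤ 6 * k ! * (k + n + 1) ^ (2 * n + 3) := by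
  have two_factors : (k + 2 * n + 3) * (k + 2 * n + 2) ≤ 6 * (k + n + 1) ^ 2 := by nlinarith
  calc (k + 2 * n + 3)! = (k + 2 * n + 3) * (k + 2 * n + 2) * (k + 2 * n + 1)! := by
        rw [show k + 2 * n + 3 = (k + 2 * n + 1) + 1 + 1 by ring, Nat.factorial_succ,
          Nat.factorial_succ]
        ring
    _ ≤ 6 * (k + n + 1) ^ 2 * (k ! * (k + n + 1) ^ (2 * n + 1)) := by
        gcongr
        exact factorial_add_le_factorial_mul_pow k n
    _ = 6 * k ! * (k + n + 1) ^ (2 * n + 3) := by ring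

theorem stmt_5 (m M : ℕ) (hM : 1 ≤ M) (hmM : M < m) :
    (Nat.factorial (m + M) : ℝ) /
      ((Nat.factorial (m - M - 1) : ℝ) * ((m : ℝ) - 1) ^ (2 * M + 1)) ≤ 6 := by
  obtain ⟨n, rfl⟩ : ∃ n, M = n + 1 := ⟨M - 1, by omega⟩
  obtain ⟨k, rfl⟩ : ∃ k, m = k + n + 2 := ⟨m - n - 2, by omega⟩
  rw [show k + n + 2 + (n + 1) = k + 2 * n + 3 by ring, show k + n + 2 - (n + 1) - 1 = k by omega,
    show 2 * (n + 1) + 1 = 2 * n + 3 by ring,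
    show ((k + n + 2 : ℕ) : ℝ) - 1 = ((k + n + 1 : ℕ) : ℝ) by push_cast; ring,
    div_le_iff₀ (by positivity), ← mul_assoc]
  exact_mod_cast factorial_add_le_six_mul_factorial_mul_pow k n
end

section
/- Let X be a real or complex Banach space and suppose a quadrature rule S with M nodes ξ₁,…,ξ_M ∈ [−1,1] and weights ω₁,…,ω_M is exact for the discrete sum, i.e. (2/m)Σ_{j=0}^{m−1} p(x_j) = Σ_{k=1}^M ω_k p(ξ_k) for every polynomial p of degree ≤ 2M−1, where x_j = −1 + 2j/(m−1). If F : [−1,1] → X is 2M-times differentiable with ‖F^{(2M)}‖ ≤ A and Σ_{j=0}^{m−1} q(x_j)² ≤ B where q(x) = ∏_{k=1}^M (x − ξ_k), then ‖(2/m)Σ_{j=0}^{m−1} F(x_j) − Σ_{k=1}^M ω_k F(ξ_k)‖ ≤ (2A/m)·B/(2M)!. -/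
/-!
Writing the nodes twice, Newton interpolation of a real function `f` at `ξ₁, ξ₁, …, ξ_M, ξ_M`
gives `f = p + f[ξ₁, ξ₁, …, ξ_M, ξ_M, x] · q(x)²` with `deg p < 2M`. The divided differences are
built from iterated Hadamard quotients `∫₀¹ f'(a + s(x - a)) ds`, and differentiating under the
integral shows that the `k`-th one is bounded by `sup |f⁽ᵏ⁾| / k!`. As `p(ξₖ) = f(ξₖ)` and the
rule is exact on `p`, its error is `(2/m) Σⱼ f[ξ₁, ξ₁, …, ξ_M, ξ_M, x_j] q(x_j)²`. The
Banach-space case follows by applying a norming functional, so `X` need not be complete.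
-/

open MeasureTheory Set Polynomial
open scoped Interval Nat

noncomputable section

/-- For `j = 0` and `u = f'` this is Hadamard's quotient `(f x - f a) / (x - a)`, extended smoothly
across `x = a`. -/
def hadamardAvg (a : ℝ) (j : ℕ) (u : ℝ → ℝ) (x : ℝ) : ℝ :=
  ∫ s in (0 : ℝ)..1, s ^ j * u (a + s * (x - a))

theorem continuous_hadamardAvg {u : ℝ → ℝ} (hu : Continuous u) (a : ℝ) (j : ℕ) :
    Continuous (hadamardAvg a j u) :=
  intervalIntegral.continuous_parametric_intervalIntegral_of_continuous' (by fun_prop) 0 1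

theorem hasDerivAt_hadamardAvg {u : ℝ → ℝ} (hu : ContDiff ℝ 1 u) (a : ℝ) (j : ℕ) (x₀ : ℝ) :
    HasDerivAt (hadamardAvg a j u) (hadamardAvg a (j + 1) (deriv u) x₀) x₀ := by
  have hu' : Continuous (deriv u) := hu.continuous_deriv le_rfl
  obtain ⟨C, hC⟩ := ((isCompact_closedBall x₀ 1).prod isCompact_Icc).exists_bound_of_continuousOn
    (f := fun p : ℝ × ℝ => p.2 ^ (j + 1) * deriv u (a + p.2 * (p.1 - a))) (by fun_prop)
  refine (intervalIntegral.hasDerivAt_integral_of_dominated_loc_of_deriv_le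
    (F' := fun x s => s ^ (j + 1) * deriv u (a + s * (x - a))) (bound := fun _ => C)
    (Metric.ball_mem_nhds x₀ one_pos) ?_ ?_ ?_ ?_ intervalIntegrable_const ?_).2
  · exact .of_forall fun x => (by fun_prop : Continuous _).aestronglyMeasurable
  · exact (by fun_prop : Continuous _).intervalIntegrable _ _
  · exact (by fun_prop : Continuous _).aestronglyMeasurable
  · refine .of_forall fun s hs x hx => hC (x, s) ⟨Metric.ball_subset_closedBall hx, ?_⟩
    exact Ioc_subset_Icc_self (by simpa [uIoc_of_le zero_le_one] using hs)
  · refine .of_forall fun s _ x _ => ?_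
    have hinner : HasDerivAt (fun y => a + s * (y - a)) s x := by
      simpa using (((hasDerivAt_id x).sub_const a).const_mul s).const_add a
    exact (((hu.differentiable one_ne_zero _).hasDerivAt.comp x hinner).const_mul
      (s ^ j)).congr_deriv (by ring)

theorem deriv_hadamardAvg {u : ℝ → ℝ} (hu : ContDiff ℝ 1 u) (a : ℝ) (j : ℕ) :
    deriv (hadamardAvg a j u) = hadamardAvg a (j + 1) (deriv u) :=
  funext fun x => (hasDerivAt_hadamardAvg hu a j x).deriv

theorem contDiff_hadamardAvg (r : ℕ) {u : ℝ → ℝ} (hu : ContDiff ℝ r u) (a : ℝ) (j : ℕ) :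
    ContDiff ℝ r (hadamardAvg a j u) := by
  induction r generalizing u j with
  | zero => exact contDiff_zero.2 (continuous_hadamardAvg (contDiff_zero.1 hu) a j)
  | succ r ih =>
    have hu1 : ContDiff ℝ 1 u := hu.of_le (by exact_mod_cast r.succ_pos)
    rw [Nat.cast_succ] at hu ⊢
    refine contDiff_succ_iff_deriv.2 ⟨fun x => (hasDerivAt_hadamardAvg hu1 a j x).differentiableAt,
      by simp, ?_⟩
    rw [deriv_hadamardAvg hu1]
    exact ih hu.deriv' (j + 1)

theorem iteratedDeriv_hadamardAvg (i : ℕ) {u : ℝ → ℝ} (hu : ContDiff ℝ i u) (a : ℝ) (j : ℕ) :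
    iteratedDeriv i (hadamardAvg a j u) = hadamardAvg a (j + i) (iteratedDeriv i u) := by
  induction i generalizing u j with
  | zero => simp
  | succ i ih =>
    have hu1 : ContDiff ℝ 1 u := hu.of_le (by exact_mod_cast i.succ_pos)
    rw [Nat.cast_succ] at hu
    rw [iteratedDeriv_succ', deriv_hadamardAvg hu1, ih hu.deriv', iteratedDeriv_succ',
      add_right_comm, add_assoc]

theorem abs_hadamardAvg_le {S : Set ℝ} (hS : Convex ℝ S) {u : ℝ → ℝ}
    {a x C : ℝ} (ha : a ∈ S) (hx : x ∈ S) (hC : ∀ y ∈ S, |u y| ≤ C) (j : ℕ) :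
    |hadamardAvg a j u x| ≤ C / (j + 1) := by
  have hbound : ∀ s ∈ Ioc (0 : ℝ) 1, ‖s ^ j * u (a + s * (x - a))‖ ≤ C * s ^ j := by
    intro s hs
    have hmem : a + s * (x - a) ∈ S := hS.add_smul_sub_mem ha hx ⟨hs.1.le, hs.2⟩
    rw [Real.norm_eq_abs, abs_mul, abs_of_nonneg (pow_nonneg hs.1.le j), mul_comm]
    exact mul_le_mul_of_nonneg_right (hC _ hmem) (pow_nonneg hs.1.le j)
  calc |hadamardAvg a j u x| ≤ ∫ s in (0 : ℝ)..1, C * s ^ j :=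
        intervalIntegral.norm_integral_le_of_norm_le zero_le_one (.of_forall hbound)
          ((by fun_prop : Continuous fun s : ℝ => C * s ^ j).intervalIntegrable _ _)
    _ = C / (j + 1) := by simp [integral_pow, div_eq_mul_inv]

theorem eq_add_sub_mul_hadamardAvg {f : ℝ → ℝ} (hf : ContDiff ℝ 1 f) (a x : ℝ) :
    f x = f a + (x - a) * hadamardAvg a 0 (deriv f) x := by
  have hderiv : ∀ s, HasDerivAt (fun s => f (a + s * (x - a)))
      ((x - a) * (s ^ 0 * deriv f (a + s * (x - a)))) s := by
    intro s
    exact ((hf.differentiable one_ne_zero _).hasDerivAt.comp s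
      (((hasDerivAt_id s).mul_const (x - a)).const_add a)).congr_deriv (by simp [mul_comm])
  have hcont : Continuous (deriv f) := hf.continuous_deriv le_rfl
  rw [hadamardAvg, ← intervalIntegral.integral_const_mul,
    intervalIntegral.integral_eq_sub_of_hasDerivAt (fun s _ => hderiv s)
      ((by fun_prop : Continuous _).intervalIntegrable _ _)]
  simp only [one_mul, zero_mul, add_zero, add_sub_cancel]

theorem Polynomial.degree_le_sub_one_of_degree_lt {R : Type*} [Semiring R] {p : R[X]} {n : ℕ}
    (hp : p.degree < n) : p.degree ≤ ↑(n - 1) := by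
  rw [degree_le_iff_coeff_zero]
  rw [degree_lt_iff_coeff_zero] at hp
  intro m hm
  have : n - 1 < m := by exact_mod_cast hm
  exact hp m (by omega)

/-- `dividedDiff [t₁, …, tₙ] f x` is the divided difference `f[t₁, …, tₙ, x]`; being built from
Hadamard quotients, it makes sense for repeated nodes. -/
def dividedDiff : List ℝ → (ℝ → ℝ) → ℝ → ℝ
  | [], f => f
  | a :: l, f => dividedDiff l (hadamardAvg a 0 (deriv f))

theorem exists_eq_eval_add_dividedDiff_mul (l : List ℝ) {f : ℝ → ℝ}
    (hf : ContDiff ℝ l.length f) :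
    ∃ p : ℝ[X], p.degree < l.length ∧
      ∀ x, f x = p.eval x + dividedDiff l f x * (l.map (x - ·)).prod := by
  induction l generalizing f with
  | nil => exact ⟨0, by simp, fun x => by simp [dividedDiff]⟩
  | cons a l ih =>
    rw [List.length_cons, Nat.cast_succ] at hf
    obtain ⟨p, hp, hfp⟩ := ih (contDiff_hadamardAvg _ hf.deriv' a 0)
    refine ⟨C (f a) + (X - C a) * p, ?_, fun x => ?_⟩
    · refine (degree_add_le _ _).trans_lt
        (max_lt (degree_C_le.trans_lt (by exact_mod_cast l.length.succ_pos)) ?_)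
      rw [degree_mul, degree_X_sub_C, List.length_cons, Nat.cast_succ,
        add_comm (l.length : WithBot ℕ)]
      exact WithBot.add_lt_add_left WithBot.one_ne_bot hp
    · rw [eq_add_sub_mul_hadamardAvg (hf.of_le le_add_self) a x, hfp x]
      simp only [dividedDiff, eval_add, eval_mul, eval_C, eval_sub, eval_X, List.map_cons,
        List.prod_cons]
      ring

theorem abs_dividedDiff_le {S : Set ℝ} (hS : Convex ℝ S) (l : List ℝ) (hl : ∀ a ∈ l, a ∈ S)
    {f : ℝ → ℝ} (hf : ContDiff ℝ l.length f) {C : ℝ}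
    (hC : ∀ y ∈ S, |iteratedDeriv l.length f y| ≤ C) {x : ℝ} (hx : x ∈ S) :
    |dividedDiff l f x| ≤ C / l.length ! := by
  induction l generalizing f C with
  | nil => simpa [dividedDiff] using hC x hx
  | cons a l ih =>
    rw [List.length_cons, Nat.cast_succ] at hf
    have hg : iteratedDeriv l.length (hadamardAvg a 0 (deriv f)) =
        hadamardAvg a l.length (iteratedDeriv (l.length + 1) f) := by
      rw [iteratedDeriv_hadamardAvg _ hf.deriv', iteratedDeriv_succ', zero_add]
    have := ih (fun b hb => hl b (List.mem_cons_of_mem a hb))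
      (contDiff_hadamardAvg _ hf.deriv' a 0) (C := C / (l.length + 1))
      (fun y hy => hg ▸ abs_hadamardAvg_le hS (hl a List.mem_cons_self) hy hC _)
    simpa [dividedDiff, Nat.factorial_succ, div_div, mul_comm] using this

theorem exists_degree_lt_abs_sub_eval_le {S : Set ℝ} (hS : Convex ℝ S) {M : ℕ} {ξ : Fin M → ℝ}
    (hξ : ∀ k, ξ k ∈ S) {f : ℝ → ℝ} (hf : ContDiff ℝ (2 * M) f) {A : ℝ}
    (hA : ∀ y ∈ S, |iteratedDeriv (2 * M) f y| ≤ A) :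
    ∃ p : ℝ[X], p.degree < ↑(2 * M) ∧
      ∀ x ∈ S, |f x - p.eval x| ≤ A / (2 * M)! * (∏ k, (x - ξ k)) ^ 2 := by
  set l := List.ofFn ξ ++ List.ofFn ξ
  have hlen : l.length = 2 * M := by simp [l, two_mul]
  have hl : ∀ a ∈ l, a ∈ S := by simp [l, List.mem_ofFn, hξ]
  have hprod : ∀ x, (l.map (x - ·)).prod = (∏ k, (x - ξ k)) ^ 2 := by
    simp [l, List.map_ofFn, List.prod_ofFn, sq, Function.comp_def]
  rw [← hlen] at hA ⊢
  replace hf : ContDiff ℝ l.length f := by rw [hlen]; exact_mod_cast hf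
  obtain ⟨p, hp, hfp⟩ := exists_eq_eval_add_dividedDiff_mul l hf
  refine ⟨p, hp, fun x hx => ?_⟩
  rw [hfp x, add_sub_cancel_left, hprod, abs_mul, abs_sq]
  exact mul_le_mul_of_nonneg_right (abs_dividedDiff_le hS l hl hf hA hx) (sq_nonneg _)

theorem abs_quadrature_error_le {ι : Type*} (s : Finset ι) {S : Set ℝ} (hS : Convex ℝ S)
    {y : ι → ℝ} (hy : ∀ j ∈ s, y j ∈ S) {M : ℕ} {ξ : Fin M → ℝ} (hξ : ∀ k, ξ k ∈ S)
    (ω : Fin M → ℝ) {c : ℝ} (hc : 0 ≤ c)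
    (hexact : ∀ p : ℝ[X], p.degree < ↑(2 * M) →
      c * ∑ j ∈ s, p.eval (y j) = ∑ k, ω k * p.eval (ξ k))
    {f : ℝ → ℝ} (hf : ContDiff ℝ (2 * M) f) {A : ℝ}
    (hA : ∀ y ∈ S, |iteratedDeriv (2 * M) f y| ≤ A) :
    |c * ∑ j ∈ s, f (y j) - ∑ k, ω k * f (ξ k)| ≤
      c * (A / (2 * M)! * ∑ j ∈ s, (∏ k, (y j - ξ k)) ^ 2) := by
  obtain ⟨p, hp, hfp⟩ := exists_degree_lt_abs_sub_eval_le hS hξ hf hA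
  have hnodes : ∀ k, f (ξ k) = p.eval (ξ k) := fun k => by
    have := hfp (ξ k) (hξ k)
    rw [Finset.prod_eq_zero (Finset.mem_univ k) (sub_self _)] at this
    simpa [sub_eq_zero] using this
  calc |c * ∑ j ∈ s, f (y j) - ∑ k, ω k * f (ξ k)|
      = c * |∑ j ∈ s, (f (y j) - p.eval (y j))| := by
        simp_rw [hnodes, ← hexact p hp, Finset.sum_sub_distrib, ← mul_sub, abs_mul,
          abs_of_nonneg hc]
    _ ≤ c * ∑ j ∈ s, A / (2 * M)! * (∏ k, (y j - ξ k)) ^ 2 := by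
        gcongr
        exact (Finset.abs_sum_le_sum_abs _ _).trans
          (Finset.sum_le_sum fun j hj => hfp _ (hy j hj))
    _ = c * (A / (2 * M)! * ∑ j ∈ s, (∏ k, (y j - ξ k)) ^ 2) := by simp only [Finset.mul_sum]

theorem ContinuousLinearMap.iteratedDeriv_comp_left {𝕜 X Y : Type*} [NontriviallyNormedField 𝕜]
    [NormedAddCommGroup X] [NormedSpace 𝕜 X] [NormedAddCommGroup Y] [NormedSpace 𝕜 Y]
    (ℓ : X →L[𝕜] Y) {F : 𝕜 → X}
    {n : ℕ} (hF : ContDiff 𝕜 n F) (t : 𝕜) :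
    iteratedDeriv n (ℓ ∘ F) t = ℓ (iteratedDeriv n F t) := by
  rw [iteratedDeriv_eq_iteratedFDeriv, iteratedDeriv_eq_iteratedFDeriv,
    ℓ.iteratedFDeriv_comp_left hF.contDiffAt le_rfl]
  rfl

theorem neg_one_add_two_mul_div_mem_Icc {j m : ℕ} (hj : j < m) :
    -1 + 2 * (j : ℝ) / ((m : ℝ) - 1) ∈ Icc (-1 : ℝ) 1 := by
  have hjm : (j : ℝ) ≤ (m : ℝ) - 1 := by
    have : (j : ℝ) + 1 ≤ m := by exact_mod_cast hj
    linarith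
  have hnonneg : 0 ≤ 2 * (j : ℝ) / ((m : ℝ) - 1) :=
    div_nonneg (by positivity) (j.cast_nonneg.trans hjm)
  have hle : 2 * (j : ℝ) / ((m : ℝ) - 1) ≤ 2 :=
    div_le_of_le_mul₀ (j.cast_nonneg.trans hjm) zero_le_two (by linarith)
  constructor <;> linarith

end

theorem stmt_16_general {X : Type*} [NormedAddCommGroup X] [NormedSpace ℝ X]
    (M m : ℕ)
    (ξ : Fin M → ℝ) (hξ : ∀ k, ξ k ∈ Set.Icc (-1 : ℝ) 1)
    (ω : Fin M → ℝ)
    (x : ℕ → ℝ) (hx : ∀ j, x j = -1 + 2 * (j : ℝ) / ((m : ℝ) - 1))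
    (hexact : ∀ p : Polynomial ℝ, p.degree ≤ (2 * M - 1 : ℕ) →
      (2 / (m : ℝ)) * ∑ j ∈ Finset.range m, p.eval (x j) =
        ∑ k, ω k * p.eval (ξ k))
    (F : ℝ → X) (hF : ContDiff ℝ (2 * M) F)
    (A B : ℝ)
    (hA : ∀ t ∈ Set.Icc (-1 : ℝ) 1, ‖iteratedDeriv (2 * M) F t‖ ≤ A)
    (hB : ∑ j ∈ Finset.range m, (∏ k, (x j - ξ k)) ^ 2 ≤ B) :
    ‖(2 / (m : ℝ)) • ∑ j ∈ Finset.range m, F (x j) - ∑ k, ω k • F (ξ k)‖ ≤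
      2 * A / (m : ℝ) * B / (Nat.factorial (2 * M)) := by
  set E := (2 / (m : ℝ)) • ∑ j ∈ Finset.range m, F (x j) - ∑ k, ω k • F (ξ k)
  obtain ⟨ℓ, hℓ, hℓE⟩ := exists_dual_vector'' ℝ E
  have hA₀ : 0 ≤ A := (norm_nonneg _).trans (hA 0 (by norm_num))
  have hAℓ : ∀ t ∈ Icc (-1 : ℝ) 1, |iteratedDeriv (2 * M) (ℓ ∘ F) t| ≤ A := fun t ht => by
    rw [ℓ.iteratedDeriv_comp_left hF]
    exact (ℓ.le_opNorm _).trans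
      (by simpa using mul_le_mul hℓ (hA t ht) (norm_nonneg _) zero_le_one)
  have herr := abs_quadrature_error_le (Finset.range m) (convex_Icc (-1) 1)
    (fun j hj => hx j ▸ neg_one_add_two_mul_div_mem_Icc (Finset.mem_range.1 hj)) hξ ω
    (by positivity) (fun p hp => hexact p (degree_le_sub_one_of_degree_lt hp))
    (ℓ.contDiff.comp hF) hAℓ
  calc ‖E‖ = ℓ E := by exact_mod_cast hℓE.symm
    _ = (2 / (m : ℝ)) * ∑ j ∈ Finset.range m, (ℓ ∘ F) (x j) - ∑ k, ω k * (ℓ ∘ F) (ξ k) := by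
        simp [E, map_sum]
    _ ≤ 2 / (m : ℝ) * (A / (2 * M)! * B) := (le_abs_self _).trans (herr.trans (by gcongr))
    _ = _ := by ring

theorem stmt_16 {X : Type*} [NormedAddCommGroup X] [NormedSpace ℝ X]
    (M m : ℕ) (hM : 1 ≤ M) (hm : 2 ≤ m)
    (ξ : Fin M → ℝ) (hξ : ∀ k, ξ k ∈ Set.Icc (-1 : ℝ) 1)
    (ω : Fin M → ℝ)
    (x : ℕ → ℝ) (hx : ∀ j, x j = -1 + 2 * (j : ℝ) / ((m : ℝ) - 1))
    (hexact : ∀ p : Polynomial ℝ, p.degree ≤ (2 * M - 1 : ℕ) →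
      (2 / (m : ℝ)) * ∑ j ∈ Finset.range m, p.eval (x j) =
        ∑ k, ω k * p.eval (ξ k))
    (F : ℝ → X) (hF : ContDiff ℝ (2 * M) F)
    (A B : ℝ)
    (hA : ∀ t ∈ Set.Icc (-1 : ℝ) 1, ‖iteratedDeriv (2 * M) F t‖ ≤ A)
    (hB : ∑ j ∈ Finset.range m, (∏ k, (x j - ξ k)) ^ 2 ≤ B) :
    ‖(2 / (m : ℝ)) • ∑ j ∈ Finset.range m, F (x j) - ∑ k, ω k • F (ξ k)‖ ≤
      2 * A / (m : ℝ) * B / (Nat.factorial (2 * M)) :=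
  stmt_16_general M m ξ hξ ω x hx hexact F hF A B hA hB
end
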